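/- Let P be a zero–nonzero pattern on n nodes and let V_C ⊆ V. Then (P, V_C) is controllable if and only if V_C is both a classical zero forcing set and a strong zero forcing set of P. -/
import Mathlib


/-- An entry of a zero–nonzero pattern: `×` (nonzero), `0`, or `?` (unrestricted). -/
inductive ZNZEntry : Type
  | nz | zero | unk
deriving DecidableEq

/-- A real number matches a zero–nonzero pattern entry. -/
def matchesZNZ : ZNZEntry → ℝ → Prop
  | .nz, a => a ≠ 0
  | .zero, a => a = 0
  | .unk, _ => True

/-- The qualitative class of a zero–nonzero pattern: real matrices whose entries are
nonzero/zero as prescribed. -/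
def QClassZ {n : ℕ} (P : Fin n → Fin n → ZNZEntry)
    (A : Matrix (Fin n) (Fin n) ℝ) : Prop :=
  ∀ i j : Fin n, matchesZNZ (P i j) (A i j)

/-- One step of the classical coloring rule played on the pattern `P`: a node `v`,
either black or white with `P v v ≠ ?`, having exactly one white out-neighbor `u`
(out-neighbors of `v` are the `u` with `P u v ≠ 0`), forces `u` black. -/
inductive CStep {n : ℕ} (P : Fin n → Fin n → ZNZEntry) :
    Finset (Fin n) → Finset (Fin n) → Prop
  | force (B : Finset (Fin n)) (v u : Fin n)
      (hv : v ∈ B ∨ P v v ≠ ZNZEntry.unk)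
      (hW : Finset.univ.filter (fun x => x ∉ B ∧ P x v ≠ ZNZEntry.zero) = {u}) :
      CStep P B (insert u B)

/-- `Z` is a classical zero forcing set of `P`: repeated application of the classical
coloring rule starting from black set `Z` blackens all nodes. -/
def ClassicalZFS {n : ℕ} (P : Fin n → Fin n → ZNZEntry) (Z : Finset (Fin n)) : Prop :=
  Relation.ReflTransGen (CStep P) Z Finset.univ

/-- The looped pattern `P^×`: off-diagonal as `P`; diagonal `×` if `P i i = 0` and
`?` if `P i i ∈ {×, ?}`. -/
def looped {n : ℕ} (P : Fin n → Fin n → ZNZEntry) : Fin n → Fin n → ZNZEntry :=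
  fun i j =>
    if i = j then
      (match P i i with
        | ZNZEntry.zero => ZNZEntry.nz
        | _ => ZNZEntry.unk)
    else P i j

/-- `Z` is a strong zero forcing set of `P`: it is a classical zero forcing set of the
looped pattern `P^×`. -/
def StrongZFS {n : ℕ} (P : Fin n → Fin n → ZNZEntry) (Z : Finset (Fin n)) : Prop :=
  ClassicalZFS (looped P) Z

/-- `(P, V_C)` is controllable: for every `A ∈ Q(P)`, every `λ ∈ ℂ`, and every nonzero
left eigenvector `w` of `A` for `λ`, some coordinate of `w` in `V_C` is nonzero (the PBH
test for the pair `(A, B)` with control nodes `V_C`). -/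
def PatternControllable {n : ℕ} (P : Fin n → Fin n → ZNZEntry)
    (VC : Finset (Fin n)) : Prop :=
  ∀ A : Matrix (Fin n) (Fin n) ℝ, QClassZ P A →
    ∀ (lam : ℂ) (w : Fin n → ℂ), w ≠ 0 →
      Matrix.vecMul w (A.map (Complex.ofReal ·)) = lam • w →
      ∃ j ∈ VC, w j ≠ 0

namespace Stmt10Aux

variable {n : ℕ}

lemma cstep_mono {P : Fin n → Fin n → ZNZEntry} {B B' : Finset (Fin n)}
    (h : CStep P B B') : B ⊆ B' := by
  cases h with
  | force v u hv hW => exact Finset.subset_insert _ _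

lemma rtg_mono {P : Fin n → Fin n → ZNZEntry} {Z B : Finset (Fin n)}
    (h : Relation.ReflTransGen (CStep P) Z B) : Z ⊆ B := by
  induction h with
  | refl => exact subset_rfl
  | tail _ hstep ih => exact ih.trans (cstep_mono hstep)

lemma rtg_closed {P : Fin n → Fin n → ZNZEntry} {C : Finset (Fin n)}
    (hC : ∀ (B : Finset (Fin n)) (v u : Fin n), B ⊆ C →
      (v ∈ B ∨ P v v ≠ ZNZEntry.unk) →
      Finset.univ.filter (fun x => x ∉ B ∧ P x v ≠ ZNZEntry.zero) = {u} → u ∈ C)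
    {X Y : Finset (Fin n)} (h : Relation.ReflTransGen (CStep P) X Y) (hX : X ⊆ C) :
    Y ⊆ C := by
  induction h with
  | refl => exact hX
  | tail _ hstep ih =>
    cases hstep with
    | force v u hv hW => exact Finset.insert_subset (hC _ v u ih hv hW) ih

lemma exists_stalled (Q : Fin n → Fin n → ZNZEntry) (Z : Finset (Fin n)) :
    ∃ B, Relation.ReflTransGen (CStep Q) Z B ∧ ∀ B', ¬ CStep Q B B' := by
  suffices h : ∀ m (B : Finset (Fin n)), Relation.ReflTransGen (CStep Q) Z B →
      n - B.card ≤ m → ∃ B', Relation.ReflTransGen (CStep Q) Z B' ∧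
        ∀ B'', ¬ CStep Q B' B'' by
    exact h n Z .refl (by simp)
  intro m
  induction m with
  | zero =>
    intro B hB hcard
    refine ⟨B, hB, ?_⟩
    have hBu : B = Finset.univ := by
      apply Finset.eq_univ_of_card
      have h1 := B.card_le_univ
      simp only [Finset.card_univ, Fintype.card_fin] at h1 ⊢
      omega
    subst hBu
    intro B'' hstep
    cases hstep with
    | force v u hv hW =>
      have hu : u ∈ Finset.univ.filter
          (fun x => x ∉ (Finset.univ : Finset (Fin n)) ∧ Q x v ≠ ZNZEntry.zero) := by
        rw [hW]; exact Finset.mem_singleton_self u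
      simp at hu
  | succ m ih =>
    intro B hB hcard
    by_cases h : ∃ B'', CStep Q B B''
    · obtain ⟨B'', hstep⟩ := h
      cases hstep with
      | force v u hv hW =>
        have hu : u ∈ Finset.univ.filter (fun x => x ∉ B ∧ Q x v ≠ ZNZEntry.zero) := by
          rw [hW]; exact Finset.mem_singleton_self u
        simp only [Finset.mem_filter] at hu
        have hcard' : (insert u B).card = B.card + 1 :=
          Finset.card_insert_of_notMem hu.2.1
        refine ih (insert u B) (hB.tail (CStep.force B v u hv hW)) ?_
        have := (insert u B).card_le_univ
        simp only [Finset.card_univ, Fintype.card_fin] at this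
        omega
    · exact ⟨B, hB, fun B'' h' => h ⟨_, h'⟩⟩

lemma looped_diag_ne_zero (P : Fin n → Fin n → ZNZEntry) (v : Fin n) :
    looped P v v ≠ ZNZEntry.zero := by
  unfold looped
  simp only [if_pos rfl]
  cases h : P v v <;> simp

lemma looped_diag_ne_unk {P : Fin n → Fin n → ZNZEntry} {v : Fin n}
    (h : looped P v v ≠ ZNZEntry.unk) : P v v = ZNZEntry.zero := by
  unfold looped at h
  simp only [if_pos rfl] at h
  cases hv : P v v <;> rw [hv] at h <;> simp_all

lemma off_diag_nz {P : Fin n → Fin n → ZNZEntry}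
    (hP : ∀ i j : Fin n, i ≠ j → P i j ≠ ZNZEntry.unk) {u v : Fin n}
    (hne : u ≠ v) (h : P u v ≠ ZNZEntry.zero) : P u v = ZNZEntry.nz := by
  have := hP u v hne
  cases hv : P u v <;> simp_all

/-! ### The easy direction: zero forcing implies controllability -/

lemma controllable_of {P : Fin n → Fin n → ZNZEntry}
    (hP : ∀ i j : Fin n, i ≠ j → P i j ≠ ZNZEntry.unk) {VC : Finset (Fin n)}
    (hcl : ClassicalZFS P VC) (hst : StrongZFS P VC) : PatternControllable P VC := by
  intro A hA lam w hw heig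
  by_contra hcon
  push_neg at hcon
  set C : Finset (Fin n) := Finset.univ.filter (fun j => w j = 0) with hCdef
  have hmemC : ∀ j, j ∈ C ↔ w j = 0 := by intro j; simp [hCdef]
  have hVC : VC ⊆ C := fun j hj => (hmemC j).mpr (hcon j hj)
  have hcomp : ∀ v : Fin n, ∑ x, w x * (A x v : ℂ) = lam * w v := by
    intro v
    have := congrFun heig v
    simpa [Matrix.vecMul, dotProduct, Matrix.map_apply, Pi.smul_apply,
      smul_eq_mul] using this
  have hcollapse : ∀ (Q : Fin n → Fin n → ZNZEntry),
      (∀ x v : Fin n, Q x v = ZNZEntry.zero → A x v = 0) →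
      ∀ (B : Finset (Fin n)) (v u : Fin n), B ⊆ C →
      Finset.univ.filter (fun x => x ∉ B ∧ Q x v ≠ ZNZEntry.zero) = {u} →
      w u * (A u v : ℂ) = lam * w v := by
    intro Q hQ B v u hB hW
    have hss : (∑ x, w x * (A x v : ℂ)) = w u * (A u v : ℂ) := by
      refine Finset.sum_eq_single u ?_ ?_
      · intro x _ hxu
        by_cases hxB : x ∈ B
        · have : w x = 0 := (hmemC x).mp (hB hxB)
          simp [this]
        · have hxP : Q x v = ZNZEntry.zero := by
            by_contra hne
            have hx : x ∈ ({u} : Finset (Fin n)) := by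
              rw [← hW]; simp [hxB, hne]
            exact hxu (Finset.mem_singleton.mp hx)
          rw [hQ x v hxP]
          simp
      · intro h; exact absurd (Finset.mem_univ u) h
    rw [← hss]; exact hcomp v
  have hAzero : ∀ x v : Fin n, P x v = ZNZEntry.zero → A x v = 0 := by
    intro x v h
    have := hA x v
    rwa [h] at this
  have key : Finset.univ ⊆ C := by
    rcases eq_or_ne lam 0 with hlam | hlam
    · refine rtg_closed ?_ hcl hVC
      intro B v u hB hv hW
      have hu : u ∉ B ∧ P u v ≠ ZNZEntry.zero := by
        have h1 : u ∈ Finset.univ.filter (fun x => x ∉ B ∧ P x v ≠ ZNZEntry.zero) := by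
          rw [hW]; exact Finset.mem_singleton_self u
        simpa using h1
      have hsum := hcollapse P hAzero B v u hB hW
      rw [hlam, zero_mul] at hsum
      have hAu : A u v ≠ 0 := by
        rcases eq_or_ne u v with hrfl | hne
        · subst hrfl
          have hPvv : P u u ≠ ZNZEntry.unk := hv.resolve_left hu.1
          have hnz : P u u = ZNZEntry.nz := by
            cases h : P u u <;> simp_all
          have := hA u u
          rwa [hnz] at this
        · have hnz := off_diag_nz hP hne hu.2
          have := hA u v
          rwa [hnz] at this
      have : w u = 0 := by
        rcases mul_eq_zero.mp hsum with h | h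
        · exact h
        · exact absurd h (by exact_mod_cast hAu)
      exact (hmemC u).mpr this
    · refine rtg_closed ?_ hst hVC
      intro B v u hB hv hW
      have hu : u ∉ B ∧ looped P u v ≠ ZNZEntry.zero := by
        have h1 : u ∈ Finset.univ.filter
            (fun x => x ∉ B ∧ looped P x v ≠ ZNZEntry.zero) := by
          rw [hW]; exact Finset.mem_singleton_self u
        simpa using h1
      have hLzero : ∀ x v : Fin n, looped P x v = ZNZEntry.zero → A x v = 0 := by
        intro x v h
        have hxv : x ≠ v := fun hrfl => looped_diag_ne_zero P v (hrfl ▸ h)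
        apply hAzero
        rwa [looped, if_neg hxv] at h
      have hsum := hcollapse (looped P) hLzero B v u hB hW
      rcases eq_or_ne u v with hrfl | hne
      · subst hrfl
        have hPvv : P u u = ZNZEntry.zero :=
          looped_diag_ne_unk (hv.resolve_left hu.1)
        rw [hAzero u u hPvv] at hsum
        simp only [Complex.ofReal_zero, mul_zero] at hsum
        have : w u = 0 := by
          rcases mul_eq_zero.mp hsum.symm with h | h
          · exact absurd h hlam
          · exact h
        exact (hmemC u).mpr this
      · have hvB : v ∈ B := by
          by_contra hvB
          have hvf : v ∈ ({u} : Finset (Fin n)) := by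
            rw [← hW]; simp [hvB, looped_diag_ne_zero P v]
          exact hne ((Finset.mem_singleton.mp hvf).symm)
        have hwv : w v = 0 := (hmemC v).mp (hB hvB)
        rw [hwv, mul_zero] at hsum
        have hLuv : looped P u v = P u v := by rw [looped, if_neg hne]
        have hnz := off_diag_nz hP hne (hLuv ▸ hu.2)
        have hAu : A u v ≠ 0 := by have := hA u v; rwa [hnz] at this
        have : w u = 0 := by
          rcases mul_eq_zero.mp hsum with h | h
          · exact h
          · exact absurd h (by exact_mod_cast hAu)
        exact (hmemC u).mpr this
  exact hw (funext fun j => (hmemC j).mp (key (Finset.mem_univ j)))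

/-! ### Witness constructions for the hard direction -/

/-- The white out-neighbor set of `v` relative to black set `B`. -/
def Sset (P : Fin n → Fin n → ZNZEntry) (B : Finset (Fin n)) (v : Fin n) :
    Finset (Fin n) :=
  Finset.univ.filter (fun x => x ∉ B ∧ P x v ≠ ZNZEntry.zero)

def mpick (s : Finset (Fin n)) (d : Fin n) : Fin n :=
  if h : s.Nonempty then s.min' h else d

lemma mpick_mem {s : Finset (Fin n)} (h : s.Nonempty) (d : Fin n) :
    mpick s d ∈ s := by
  rw [mpick, dif_pos h]; exact s.min'_mem h

lemma mem_Sset {P : Fin n → Fin n → ZNZEntry} {B : Finset (Fin n)} {v x : Fin n} :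
    x ∈ Sset P B v ↔ x ∉ B ∧ P x v ≠ ZNZEntry.zero := by
  simp [Sset]

lemma sum_mpick (s : Finset (Fin n)) (d : Fin n) (hne : s.Nonempty) (a b : ℝ) :
    ∑ x ∈ s, (if x = mpick s d then a else b) = a + ((s.card : ℝ) - 1) * b := by
  have hm := mpick_mem hne d
  rw [← Finset.add_sum_erase _ _ hm, if_pos rfl]
  have herase : ∀ x ∈ s.erase (mpick s d),
      (if x = mpick s d then a else b) = b := by
    intro x hx
    rw [if_neg (Finset.ne_of_mem_erase hx)]
  rw [Finset.sum_congr rfl herase, Finset.sum_const, nsmul_eq_mul,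
    Finset.card_erase_of_mem hm]
  have hc0 : 1 ≤ s.card := Finset.card_pos.mpr hne
  have : ((s.card - 1 : ℕ) : ℝ) = (s.card : ℝ) - 1 := by push_cast [hc0]; ring
  rw [this]

/-- The matrix witnessing failure of controllability in the classical case. -/
noncomputable def Acl (P : Fin n → Fin n → ZNZEntry) (B : Finset (Fin n)) :
    Matrix (Fin n) (Fin n) ℝ :=
  fun x v =>
    if P x v = ZNZEntry.zero then 0
    else if x ∈ B then 1
    else if (Sset P B v).card = 1 then 0
    else if x = mpick (Sset P B v) v then 1 - ((Sset P B v).card : ℝ) else 1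

section classicalCase
variable {P : Fin n → Fin n → ZNZEntry} {B : Finset (Fin n)}
  (hstall : ∀ v u : Fin n, (v ∈ B ∨ P v v ≠ ZNZEntry.unk) → Sset P B v ≠ {u})

include hstall in
lemma Sset_card_one {v : Fin n} (h : (Sset P B v).card = 1) :
    v ∉ B ∧ P v v = ZNZEntry.unk ∧ Sset P B v = {v} := by
  obtain ⟨u, hu⟩ := Finset.card_eq_one.mp h
  have hnv : ¬(v ∈ B ∨ P v v ≠ ZNZEntry.unk) := fun hv => hstall v u hv hu
  push_neg at hnv
  obtain ⟨h1, h2⟩ := hnv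
  have hv : v ∈ Sset P B v := mem_Sset.mpr ⟨h1, by rw [h2]; simp⟩
  rw [hu] at hv
  rw [Finset.mem_singleton] at hv
  exact ⟨h1, h2, by rw [hu, hv]⟩

include hstall in
lemma Acl_pattern : QClassZ P (Acl P B) := by
  intro i j
  rcases h : P i j with _ | _ | _
  · show Acl P B i j ≠ 0
    rw [Acl]
    rw [if_neg (by simp [h])]
    by_cases hiB : i ∈ B
    · rw [if_pos hiB]; norm_num
    · rw [if_neg hiB]
      have hiS : i ∈ Sset P B j := mem_Sset.mpr ⟨hiB, by simp [h]⟩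
      by_cases hc1 : (Sset P B j).card = 1
      · obtain ⟨-, hunk, hSj⟩ := Sset_card_one hstall hc1
        rw [hSj, Finset.mem_singleton] at hiS
        rw [hiS, hunk] at h
        exact absurd h (by simp)
      · rw [if_neg hc1]
        have hc0 : (Sset P B j).card ≠ 0 := by
          intro h0
          rw [Finset.card_eq_zero] at h0
          rw [h0] at hiS
          exact absurd hiS (Finset.notMem_empty i)
        have hc2 : 2 ≤ (Sset P B j).card := by omega
        by_cases hm : i = mpick (Sset P B j) j
        · rw [if_pos hm]
          have : (2 : ℝ) ≤ ((Sset P B j).card : ℝ) := by exact_mod_cast hc2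
          intro hcon; linarith
        · rw [if_neg hm]; norm_num
  · show Acl P B i j = 0
    rw [Acl, if_pos (by simp [h])]
  · trivial

lemma Acl_col (v : Fin n) :
    ∑ x ∈ Finset.univ.filter (fun x => x ∉ B), Acl P B x v = 0 := by
  have hsub : Sset P B v ⊆ Finset.univ.filter (fun x => x ∉ B) := by
    intro x hx
    simp only [Finset.mem_filter, Finset.mem_univ, true_and]
    exact (mem_Sset.mp hx).1
  rw [← Finset.sum_subset hsub (by
    intro x hx hxS
    simp only [Finset.mem_filter, Finset.mem_univ, true_and] at hx
    have : P x v = ZNZEntry.zero := by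
      by_contra hne
      exact hxS (mem_Sset.mpr ⟨hx, hne⟩)
    rw [Acl, if_pos this])]
  have hval : ∀ x ∈ Sset P B v, Acl P B x v =
      (if (Sset P B v).card = 1 then 0
       else if x = mpick (Sset P B v) v then 1 - ((Sset P B v).card : ℝ) else 1) := by
    intro x hx
    obtain ⟨hxB, hxP⟩ := mem_Sset.mp hx
    rw [Acl, if_neg hxP, if_neg hxB]
  rw [Finset.sum_congr rfl hval]
  by_cases hc1 : (Sset P B v).card = 1
  · simp [hc1]
  · simp only [if_neg hc1]
    rcases Finset.eq_empty_or_nonempty (Sset P B v) with he | hne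
    · simp [he]
    · rw [sum_mpick _ _ hne]; ring

end classicalCase

/-- Off-diagonal white out-neighbors. -/
def Tset (P : Fin n → Fin n → ZNZEntry) (B : Finset (Fin n)) (v : Fin n) :
    Finset (Fin n) :=
  Finset.univ.filter (fun x => x ∉ B ∧ x ≠ v ∧ P x v ≠ ZNZEntry.zero)

lemma mem_Tset {P : Fin n → Fin n → ZNZEntry} {B : Finset (Fin n)} {v x : Fin n} :
    x ∈ Tset P B v ↔ x ∉ B ∧ x ≠ v ∧ P x v ≠ ZNZEntry.zero := by
  simp [Tset]

/-- The matrix witnessing failure of controllability in the strong case. -/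
noncomputable def Ast (P : Fin n → Fin n → ZNZEntry) (B : Finset (Fin n)) :
    Matrix (Fin n) (Fin n) ℝ :=
  fun x v =>
    if P x v = ZNZEntry.zero then 0
    else if x = v then (if v ∈ B then 1 else 1 - 2 * ((Tset P B v).card : ℝ))
    else if x ∈ B then 1
    else if v ∈ B then
      (if (Tset P B v).card = 1 then 0
       else if x = mpick (Tset P B v) v then 1 - ((Tset P B v).card : ℝ) else 1)
    else if P v v = ZNZEntry.zero then
      (if x = mpick (Tset P B v) v then ((Tset P B v).card : ℝ) else -1)
    else 2

section strongCase
variable {P : Fin n → Fin n → ZNZEntry} {B : Finset (Fin n)}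
  (hstall : ∀ v u : Fin n, (v ∈ B ∨ looped P v v ≠ ZNZEntry.unk) →
    Sset (looped P) B v ≠ {u})

lemma Sset_looped_mem {v : Fin n} (hv : v ∈ B) :
    Sset (looped P) B v = Tset P B v := by
  ext x
  rw [mem_Sset, mem_Tset]
  constructor
  · rintro ⟨hxB, hxz⟩
    have hxv : x ≠ v := fun h => hxB (h ▸ hv)
    rw [looped, if_neg hxv] at hxz
    exact ⟨hxB, hxv, hxz⟩
  · rintro ⟨hxB, hxv, hxz⟩
    rw [looped]
    exact ⟨hxB, by rw [if_neg hxv]; exact hxz⟩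

lemma Sset_looped_notMem {v : Fin n} (hv : v ∉ B) :
    Sset (looped P) B v = insert v (Tset P B v) := by
  ext x
  rw [mem_Sset, Finset.mem_insert, mem_Tset]
  constructor
  · rintro ⟨hxB, hxz⟩
    by_cases hxv : x = v
    · exact Or.inl hxv
    · rw [looped, if_neg hxv] at hxz
      exact Or.inr ⟨hxB, hxv, hxz⟩
  · rintro (rfl | ⟨hxB, hxv, hxz⟩)
    · exact ⟨hv, looped_diag_ne_zero P x⟩
    · rw [looped]
      exact ⟨hxB, by rw [if_neg hxv]; exact hxz⟩

include hstall in
lemma Tset_card_ne_one {v : Fin n} (hv : v ∈ B) : (Tset P B v).card ≠ 1 := by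
  intro h
  obtain ⟨u, hu⟩ := Finset.card_eq_one.mp h
  exact hstall v u (Or.inl hv) (by rw [Sset_looped_mem hv, hu])

include hstall in
lemma Tset_card_ne_zero {v : Fin n} (hv : v ∉ B) (hz : P v v = ZNZEntry.zero) :
    (Tset P B v).card ≠ 0 := by
  intro h
  rw [Finset.card_eq_zero] at h
  have hlv : looped P v v ≠ ZNZEntry.unk := by
    rw [looped, if_pos rfl, hz]
    simp
  refine hstall v v (Or.inr hlv) ?_
  rw [Sset_looped_notMem hv, h]
  rfl

include hstall in
lemma Ast_pattern : QClassZ P (Ast P B) := by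
  intro i j
  rcases h : P i j with _ | _ | _
  · show Ast P B i j ≠ 0
    rw [Ast, if_neg (by simp [h])]
    by_cases hij : i = j
    · rw [if_pos hij]
      by_cases hjB : j ∈ B
      · rw [if_pos hjB]; norm_num
      · rw [if_neg hjB]
        intro hcon
        rcases Nat.eq_zero_or_pos (Tset P B j).card with h0 | h1
        · rw [h0] at hcon; norm_num at hcon
        · have : (1 : ℝ) ≤ ((Tset P B j).card : ℝ) := by exact_mod_cast h1
          nlinarith
    · rw [if_neg hij]
      by_cases hiB : i ∈ B
      · rw [if_pos hiB]; norm_num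
      · rw [if_neg hiB]
        have hiT : i ∈ Tset P B j := mem_Tset.mpr ⟨hiB, hij, by simp [h]⟩
        have hc0 : (Tset P B j).card ≠ 0 := by
          intro h0
          rw [Finset.card_eq_zero] at h0
          rw [h0] at hiT
          exact absurd hiT (Finset.notMem_empty i)
        by_cases hjB : j ∈ B
        · rw [if_pos hjB]
          have hc1 := Tset_card_ne_one hstall hjB
          rw [if_neg hc1]
          by_cases hm : i = mpick (Tset P B j) j
          · rw [if_pos hm]
            have hc2 : 2 ≤ (Tset P B j).card := by omega
            have : (2 : ℝ) ≤ ((Tset P B j).card : ℝ) := by exact_mod_cast hc2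
            intro hcon; linarith
          · rw [if_neg hm]; norm_num
        · rw [if_neg hjB]
          by_cases hz : P j j = ZNZEntry.zero
          · rw [if_pos hz]
            by_cases hm : i = mpick (Tset P B j) j
            · rw [if_pos hm]
              exact_mod_cast hc0
            · rw [if_neg hm]; norm_num
          · rw [if_neg hz]; norm_num
  · show Ast P B i j = 0
    rw [Ast, if_pos (by simp [h])]
  · trivial

include hstall in
lemma Ast_col (v : Fin n) :
    ∑ x ∈ Finset.univ.filter (fun x => x ∉ B), Ast P B x v =
      if v ∈ B then 0 else 1 := by
  classical
  by_cases hvB : v ∈ B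
  · rw [if_pos hvB]
    have hsub : Tset P B v ⊆ Finset.univ.filter (fun x => x ∉ B) := by
      intro x hx
      simp only [Finset.mem_filter, Finset.mem_univ, true_and]
      exact (mem_Tset.mp hx).1
    rw [← Finset.sum_subset hsub (by
      intro x hx hxT
      simp only [Finset.mem_filter, Finset.mem_univ, true_and] at hx
      have hxv : x ≠ v := fun h => hx (h ▸ hvB)
      have : P x v = ZNZEntry.zero := by
        by_contra hne
        exact hxT (mem_Tset.mpr ⟨hx, hxv, hne⟩)
      rw [Ast, if_pos this])]
    have hval : ∀ x ∈ Tset P B v, Ast P B x v =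
        (if (Tset P B v).card = 1 then 0
         else if x = mpick (Tset P B v) v then 1 - ((Tset P B v).card : ℝ) else 1) := by
      intro x hx
      obtain ⟨hxB, hxv, hxP⟩ := mem_Tset.mp hx
      rw [Ast, if_neg hxP, if_neg hxv, if_neg hxB, if_pos hvB]
    rw [Finset.sum_congr rfl hval]
    have hc1 := Tset_card_ne_one hstall hvB
    simp only [if_neg hc1]
    rcases Finset.eq_empty_or_nonempty (Tset P B v) with he | hne
    · simp [he]
    · rw [sum_mpick _ _ hne]; ring
  · rw [if_neg hvB]
    have hvW : v ∈ Finset.univ.filter (fun x => x ∉ B) := by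
      simp [hvB]
    rw [← Finset.add_sum_erase _ _ hvW]
    have hsub : Tset P B v ⊆ (Finset.univ.filter (fun x => x ∉ B)).erase v := by
      intro x hx
      obtain ⟨hxB, hxv, _⟩ := mem_Tset.mp hx
      rw [Finset.mem_erase]
      exact ⟨hxv, by simp [hxB]⟩
    rw [← Finset.sum_subset hsub (by
      intro x hx hxT
      rw [Finset.mem_erase] at hx
      obtain ⟨hxv, hx⟩ := hx
      simp only [Finset.mem_filter, Finset.mem_univ, true_and] at hx
      have : P x v = ZNZEntry.zero := by
        by_contra hne
        exact hxT (mem_Tset.mpr ⟨hx, hxv, hne⟩)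
      rw [Ast, if_pos this])]
    by_cases hz : P v v = ZNZEntry.zero
    · have hAvv : Ast P B v v = 0 := by rw [Ast, if_pos hz]
      rw [hAvv, zero_add]
      have hval : ∀ x ∈ Tset P B v, Ast P B x v =
          (if x = mpick (Tset P B v) v then ((Tset P B v).card : ℝ) else -1) := by
        intro x hx
        obtain ⟨hxB, hxv, hxP⟩ := mem_Tset.mp hx
        rw [Ast, if_neg hxP, if_neg hxv, if_neg hxB, if_neg hvB, if_pos hz]
      rw [Finset.sum_congr rfl hval]
      have hc0 := Tset_card_ne_zero hstall hvB hz
      have hne : (Tset P B v).Nonempty := Finset.card_pos.mp (by omega)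
      rw [sum_mpick _ _ hne]; ring
    · have hAvv : Ast P B v v = 1 - 2 * ((Tset P B v).card : ℝ) := by
        rw [Ast, if_neg hz, if_pos rfl, if_neg hvB]
      rw [hAvv]
      have hval : ∀ x ∈ Tset P B v, Ast P B x v = 2 := by
        intro x hx
        obtain ⟨hxB, hxv, hxP⟩ := mem_Tset.mp hx
        rw [Ast, if_neg hxP, if_neg hxv, if_neg hxB, if_neg hvB, if_neg hz]
      rw [Finset.sum_congr rfl hval, Finset.sum_const, nsmul_eq_mul]
      ring

end strongCase

/-! ### The hard direction -/

lemma wsum (B : Finset (Fin n)) (A : Matrix (Fin n) (Fin n) ℝ) (v : Fin n) :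
    ∑ x, (if x ∈ B then (0 : ℂ) else 1) * ((A x v : ℝ) : ℂ) =
      ((∑ x ∈ Finset.univ.filter (fun x => x ∉ B), A x v : ℝ) : ℂ) := by
  rw [Finset.sum_filter]
  push_cast
  apply Finset.sum_congr rfl
  intro x _
  by_cases hx : x ∈ B <;> simp [hx]

lemma not_controllable_classical {P : Fin n → Fin n → ZNZEntry}
    {VC : Finset (Fin n)} (h : ¬ ClassicalZFS P VC) :
    ¬ PatternControllable P VC := by
  intro hctrl
  obtain ⟨B, hreach, hstall0⟩ := exists_stalled P VC
  have hstall : ∀ v u : Fin n, (v ∈ B ∨ P v v ≠ ZNZEntry.unk) → Sset P B v ≠ {u} :=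
    fun v u hv hS => hstall0 _ (CStep.force B v u hv hS)
  have hBne : B ≠ Finset.univ := fun h' => h (by
    unfold ClassicalZFS; rw [← h']; exact hreach)
  obtain ⟨x0, hx0⟩ : ∃ x, x ∉ B := by
    by_contra hall
    push_neg at hall
    exact hBne (Finset.eq_univ_iff_forall.mpr hall)
  set w : Fin n → ℂ := fun x => if x ∈ B then 0 else 1 with hwdef
  have hwne : w ≠ 0 := by
    intro h0
    have := congrFun h0 x0
    simp [hwdef, hx0] at this
  have heig : Matrix.vecMul w ((Acl P B).map (Complex.ofReal ·)) = (0 : ℂ) • w := by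
    funext v
    simp only [Matrix.vecMul, dotProduct, Matrix.map_apply, Pi.smul_apply,
      smul_eq_mul, zero_mul, hwdef]
    rw [wsum B (Acl P B) v, Acl_col v]
    simp
  obtain ⟨j, hj, hwj⟩ := hctrl (Acl P B) (Acl_pattern hstall) 0 w hwne heig
  have hjB : j ∈ B := rtg_mono hreach hj
  exact hwj (by simp [hwdef, hjB])

lemma not_controllable_strong {P : Fin n → Fin n → ZNZEntry}
    {VC : Finset (Fin n)} (h : ¬ StrongZFS P VC) :
    ¬ PatternControllable P VC := by
  intro hctrl
  obtain ⟨B, hreach, hstall0⟩ := exists_stalled (looped P) VC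
  have hstall : ∀ v u : Fin n, (v ∈ B ∨ looped P v v ≠ ZNZEntry.unk) →
      Sset (looped P) B v ≠ {u} :=
    fun v u hv hS => hstall0 _ (CStep.force B v u hv hS)
  have hBne : B ≠ Finset.univ := fun h' => h (by
    unfold StrongZFS ClassicalZFS; rw [← h']; exact hreach)
  obtain ⟨x0, hx0⟩ : ∃ x, x ∉ B := by
    by_contra hall
    push_neg at hall
    exact hBne (Finset.eq_univ_iff_forall.mpr hall)
  set w : Fin n → ℂ := fun x => if x ∈ B then 0 else 1 with hwdef
  have hwne : w ≠ 0 := by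
    intro h0
    have := congrFun h0 x0
    simp [hwdef, hx0] at this
  have heig : Matrix.vecMul w ((Ast P B).map (Complex.ofReal ·)) = (1 : ℂ) • w := by
    funext v
    simp only [Matrix.vecMul, dotProduct, Matrix.map_apply, Pi.smul_apply,
      smul_eq_mul, one_mul, hwdef]
    rw [wsum B (Ast P B) v, Ast_col hstall v]
    by_cases hvB : v ∈ B <;> simp [hvB]
  obtain ⟨j, hj, hwj⟩ := hctrl (Ast P B) (Ast_pattern hstall) 1 w hwne heig
  have hjB : j ∈ B := rtg_mono hreach hj
  exact hwj (by simp [hwdef, hjB])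

end Stmt10Aux

/-- `(P, V_C)` is controllable if and only if `V_C` is both a classical
zero forcing set and a strong zero forcing set of `P`. -/
theorem stmt10 {n : ℕ} (P : Fin n → Fin n → ZNZEntry)
    (hP : ∀ i j : Fin n, i ≠ j → P i j ≠ ZNZEntry.unk)
    (VC : Finset (Fin n)) :
    PatternControllable P VC ↔ (ClassicalZFS P VC ∧ StrongZFS P VC) := by
  constructor
  · intro hctrl
    constructor
    · by_contra h
      exact Stmt10Aux.not_controllable_classical h hctrl
    · by_contra h
      exact Stmt10Aux.not_controllable_strong h hctrl
  · rintro ⟨hcl, hst⟩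
    exact Stmt10Aux.controllable_of hP hcl hst
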